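/- Let X : Ω → ℝᵖ be square-integrable with E[X] = 0 and positive definite covariance matrix Σ = E[XXᵀ], let Y, Ỹ : Ω → ℝ be measurable, and let g : ℝ × ℝ → ℝ be measurable with X·g(Y, Ỹ) square-integrable. Let V : Ω → ℝᵖ be a square-integrable version of E[X g(Y, Ỹ) | σ(Ỹ)] and set A_IR(g) = Σ⁻¹E[VVᵀ]Σ⁻¹. Let ξ be a real p×d matrix whose column space equals the column space of A_IR(g), with ξᵀΣξ invertible, and suppose E[X | σ(ξᵀX)] = P_ξ(Σ)ᵀ X P-almost everywhere. Then E[X g(Y, Ỹ) | σ(Ỹ)] = E[ E[X|σ(ξᵀX)] g(Y, Ỹ) | σ(Ỹ) ] P-almost everywhere, i.e., ξ solves the generalized inverse regression equation (11). (Theorem 4.1, part 2: the inclusion S_CSS(g) ⊆ S_IR(g).) -/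

import Mathlib

open MeasureTheory Matrix

/-! For `P = P_ξ(Σ)` and symmetric `Σ`, the transpose `Pᵀ` fixes `Σξ`, and the
column-space hypothesis puts the range of `E[VVᵀ] = Σ A_IR Σ` inside that of `Σξ`; hence
`(1 - Pᵀ) E[VVᵀ] = 0`. The second moments of `(1 - Pᵀ)V` then vanish, so `V = PᵀV` almost surely.
Since `Pᵀ` commutes with conditional expectation and the linear conditional mean says
`E[X | ξᵀX] = PᵀX`, we get `E[gX | Ỹ] = V = Pᵀ E[gX | Ỹ] = E[g PᵀX | Ỹ] = E[g E[X | ξᵀX] | Ỹ]`. -/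

namespace Matrix

variable {R : Type*} [CommRing R] {m n : Type*} [Fintype m] [Fintype n] [DecidableEq n]

/-- `P_ξ(S)`: for positive definite `S`, the `S`-orthogonal projection onto the column space
of `ξ`. -/
noncomputable def colSpanProj (S : Matrix m m R) (ξ : Matrix m n R) : Matrix m m R :=
  ξ * (ξᵀ * S * ξ)⁻¹ * ξᵀ * S

theorem colSpanProj_transpose_mul_mul_self {S : Matrix m m R} (hS : S.IsSymm)
    {ξ : Matrix m n R} (hξ : IsUnit (ξᵀ * S * ξ).det) :
    (colSpanProj S ξ)ᵀ * (S * ξ) = S * ξ := by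
  calc (colSpanProj S ξ)ᵀ * (S * ξ)
      = S * ξ * ((ξᵀ * S * ξ)⁻¹ * (ξᵀ * S * ξ)) := by
        simp only [colSpanProj, transpose_mul, transpose_nonsing_inv, hS.eq,
          transpose_transpose, Matrix.mul_assoc]
    _ = S * ξ := by rw [nonsing_inv_mul _ hξ, Matrix.mul_one]

theorem colSpanProj_transpose_mul_of_range_le [DecidableEq m] {S : Matrix m m R} (hS : S.IsSymm)
    (hSu : IsUnit S.det) {ξ : Matrix m n R} (hξ : IsUnit (ξᵀ * S * ξ).det) {M : Matrix m m R}
    (hM : LinearMap.range (S⁻¹ * M * S⁻¹).mulVecLin ≤ LinearMap.range ξ.mulVecLin) :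
    (colSpanProj S ξ)ᵀ * M = M := by
  refine ext_of_mulVec_single fun i => ?_
  obtain ⟨c, hc⟩ := hM ⟨S *ᵥ Pi.single i 1, rfl⟩
  rw [mulVecLin_apply, mulVecLin_apply] at hc
  have hSMS : S * (S⁻¹ * M * S⁻¹) * S = M := by
    simp only [← Matrix.mul_assoc, mul_nonsing_inv _ hSu, Matrix.one_mul]
    rw [Matrix.mul_assoc, nonsing_inv_mul _ hSu, Matrix.mul_one]
  have hMc : M *ᵥ Pi.single i 1 = (S * ξ) *ᵥ c := by
    rw [← hSMS, ← mulVec_mulVec, ← mulVec_mulVec, ← hc, mulVec_mulVec]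
  rw [← mulVec_mulVec, hMc, mulVec_mulVec, colSpanProj_transpose_mul_mul_self hS hξ]

end Matrix

section SecondMoment

variable {Ω : Type*} [MeasurableSpace Ω] {μ : Measure Ω} {n : Type*} [Fintype n]

noncomputable def secondMoment (V : Ω → n → ℝ) (μ : Measure Ω) : Matrix n n ℝ :=
  Matrix.of fun i j => ∫ ω, V ω i * V ω j ∂μ

theorem integral_dotProduct_sq {V : Ω → n → ℝ} (hV : MemLp V 2 μ) (a : n → ℝ) :
    ∫ ω, (a ⬝ᵥ V ω) ^ 2 ∂μ = a ⬝ᵥ (secondMoment V μ *ᵥ a) := by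
  have hint : ∀ i j, Integrable (fun ω => a i * (V ω i * V ω j) * a j) μ := fun i j =>
    (((hV.eval i).integrable_mul (hV.eval j)).const_mul _).mul_const _
  have hexpand : ∀ ω, (a ⬝ᵥ V ω) ^ 2 = ∑ i, ∑ j, a i * (V ω i * V ω j) * a j := fun ω => by
    simp only [sq, dotProduct, Finset.sum_mul_sum]
    exact Finset.sum_congr rfl fun i _ => Finset.sum_congr rfl fun j _ => by ring
  simp_rw [hexpand]
  rw [integral_finsetSum _ fun i _ => integrable_finsetSum _ fun j _ => hint i j]
  refine Finset.sum_congr rfl fun i _ => ?_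
  rw [integral_finsetSum _ fun j _ => hint i j, mulVec, dotProduct, Finset.mul_sum]
  refine Finset.sum_congr rfl fun j _ => ?_
  rw [integral_mul_const, integral_const_mul, mul_assoc, secondMoment, of_apply]

theorem ae_mulVec_eq_zero_of_mul_secondMoment_eq_zero {m : Type*} [Fintype m]
    {V : Ω → n → ℝ} (hV : MemLp V 2 μ) {Q : Matrix m n ℝ} (hQ : Q * secondMoment V μ = 0) :
    ∀ᵐ ω ∂μ, Q *ᵥ V ω = 0 := by
  have hrow : ∀ i, ∫ ω, (Q i ⬝ᵥ V ω) ^ 2 ∂μ = 0 := fun i => by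
    rw [integral_dotProduct_sq hV, dotProduct_mulVec]
    show (Q * secondMoment V μ) i ⬝ᵥ Q i = 0
    rw [hQ]
    exact zero_dotProduct _
  have hsq : ∀ i, Integrable (fun ω => (Q i ⬝ᵥ V ω) ^ 2) μ := fun i =>
    (memLp_pi_iff.mp (Q.mulVecLin.toContinuousLinearMap.comp_memLp' hV) i).integrable_sq
  have hzero : ∀ i, (fun ω => (Q i ⬝ᵥ V ω) ^ 2) =ᵐ[μ] 0 := fun i =>
    (integral_eq_zero_iff_of_nonneg (fun ω => sq_nonneg _) (hsq i)).1 (hrow i)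
  filter_upwards [ae_all_iff.2 hzero] with ω hω
  funext i
  exact pow_eq_zero_iff two_ne_zero |>.1 (hω i)

end SecondMoment

theorem stmt_12_general {Ω : Type*} [MeasurableSpace Ω]
    (μ : Measure Ω) [IsProbabilityMeasure μ]
    {p d : ℕ} (X : Ω → (Fin p → ℝ))
    (Sig : Matrix (Fin p) (Fin p) ℝ)
    (hSigpd : Sig.PosDef)
    (Y Ytil : Ω → ℝ)
    (g : ℝ × ℝ → ℝ)
    (hXg2 : MemLp (fun ω => g (Y ω, Ytil ω) • X ω) 2 μ)
    (V : Ω → (Fin p → ℝ)) (hV2 : MemLp V 2 μ)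
    (hV : V =ᵐ[μ] μ[(fun ω => g (Y ω, Ytil ω) • X ω) |
      MeasurableSpace.comap Ytil inferInstance])
    (AIR : Matrix (Fin p) (Fin p) ℝ)
    (hAIR : AIR = Sig⁻¹ * Matrix.of (fun i j => ∫ ω, V ω i * V ω j ∂μ) * Sig⁻¹)
    (ξ : Matrix (Fin p) (Fin d) ℝ)
    (hspan : LinearMap.range ξ.mulVecLin = LinearMap.range AIR.mulVecLin)
    (hξ : IsUnit (ξ.transpose * Sig * ξ).det)
    (hlcm : μ[X | MeasurableSpace.comap (fun ω => ξ.transpose.mulVec (X ω)) inferInstance]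
      =ᵐ[μ] fun ω =>
        (ξ * (ξ.transpose * Sig * ξ)⁻¹ * ξ.transpose * Sig).transpose.mulVec (X ω)) :
    μ[(fun ω => g (Y ω, Ytil ω) • X ω) |
        MeasurableSpace.comap Ytil inferInstance] =ᵐ[μ]
      μ[(fun ω => g (Y ω, Ytil ω) •
          (μ[X | MeasurableSpace.comap (fun ω' => ξ.transpose.mulVec (X ω')) inferInstance]) ω)
        | MeasurableSpace.comap Ytil inferInstance] := by
  have hS : Sig.IsSymm := isHermitian_iff_isSymm.1 hSigpd.isHermitian
  have hSu : IsUnit Sig.det := hSigpd.det_pos.ne'.isUnit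
  have hPM : (colSpanProj Sig ξ)ᵀ * secondMoment V μ = secondMoment V μ :=
    colSpanProj_transpose_mul_of_range_le hS hSu hξ (by rw [hspan, hAIR]; rfl)
  have hPV : ∀ᵐ ω ∂μ, (colSpanProj Sig ξ)ᵀ *ᵥ V ω = V ω := by
    filter_upwards [ae_mulVec_eq_zero_of_mul_secondMoment_eq_zero hV2
      (Q := 1 - (colSpanProj Sig ξ)ᵀ) (by rw [Matrix.sub_mul, Matrix.one_mul, hPM, sub_self])]
      with ω hω
    rw [sub_mulVec, one_mulVec, sub_eq_zero] at hω
    exact hω.symm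
  set T := (colSpanProj Sig ξ)ᵀ.mulVecLin.toContinuousLinearMap
  calc _ =ᵐ[μ] V := hV.symm
    _ =ᵐ[μ] T ∘ V := hPV.mono fun ω h => h.symm
    _ =ᵐ[μ] T ∘ μ[_ | _] := hV.fun_comp T
    _ =ᵐ[μ] μ[T ∘ _ | _] := T.comp_condExp_comm (hXg2.integrable one_le_two)
    _ =ᵐ[μ] _ := condExp_congr_ae <| hlcm.mono fun ω h => by
      simp only [Function.comp_apply, T, LinearMap.coe_toContinuousLinearMap', mulVecLin_apply,
        mulVec_smul, h]
      rfl

/-- Theorem 4.1, part 2, inclusion `S_CSS(g) ⊆ S_IR(g)`: if `ξ` spans the column space of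
`A_IR(g) = Σ⁻¹E[VVᵀ]Σ⁻¹` (with `V` a version of `E[Xg(Y,Ỹ)|σ(Ỹ)]`) and the linear
conditional mean holds for `ξ`, then `ξ` solves the generalized inverse regression
equation (11). -/
theorem stmt_12 {Ω : Type*} [MeasurableSpace Ω]
    (μ : Measure Ω) [IsProbabilityMeasure μ]
    {p d : ℕ} (X : Ω → (Fin p → ℝ)) (hX : Measurable X)
    (hX2 : MemLp X 2 μ) (hmean : ∫ ω, X ω ∂μ = 0)
    (Sig : Matrix (Fin p) (Fin p) ℝ)
    (hSig : ∀ i j, Sig i j = ∫ ω, X ω i * X ω j ∂μ)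
    (hSigpd : Sig.PosDef)
    (Y Ytil : Ω → ℝ) (hY : Measurable Y) (hYtil : Measurable Ytil)
    (g : ℝ × ℝ → ℝ) (hg : Measurable g)
    (hXg2 : MemLp (fun ω => g (Y ω, Ytil ω) • X ω) 2 μ)
    (V : Ω → (Fin p → ℝ)) (hV2 : MemLp V 2 μ)
    (hV : V =ᵐ[μ] μ[(fun ω => g (Y ω, Ytil ω) • X ω) |
      MeasurableSpace.comap Ytil inferInstance])
    (AIR : Matrix (Fin p) (Fin p) ℝ)
    (hAIR : AIR = Sig⁻¹ * Matrix.of (fun i j => ∫ ω, V ω i * V ω j ∂μ) * Sig⁻¹)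
    (ξ : Matrix (Fin p) (Fin d) ℝ)
    (hspan : LinearMap.range ξ.mulVecLin = LinearMap.range AIR.mulVecLin)
    (hξ : IsUnit (ξ.transpose * Sig * ξ).det)
    (hlcm : μ[X | MeasurableSpace.comap (fun ω => ξ.transpose.mulVec (X ω)) inferInstance]
      =ᵐ[μ] fun ω =>
        (ξ * (ξ.transpose * Sig * ξ)⁻¹ * ξ.transpose * Sig).transpose.mulVec (X ω)) :
    μ[(fun ω => g (Y ω, Ytil ω) • X ω) |
        MeasurableSpace.comap Ytil inferInstance] =ᵐ[μ]
      μ[(fun ω => g (Y ω, Ytil ω) •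
          (μ[X | MeasurableSpace.comap (fun ω' => ξ.transpose.mulVec (X ω')) inferInstance]) ω)
        | MeasurableSpace.comap Ytil inferInstance] :=
  stmt_12_general μ X Sig hSigpd Y Ytil g hXg2 V hV2 hV AIR hAIR ξ hspan hξ hlcm
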